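/- Let {x^N}_N be a sequence with x^N ∈ 𝒦_N = {x ∈ ℝ^{N+1} : x_{i+1}−x_i ≥ 1/(NM)}. Let μ̂^N := (N+1)^{-1} Σ_{i=0}^N δ_{x_i^N} be the empirical measure and μ^N := Σ_{i=0}^{N-1} (N(x^N_{i+1}−x^N_i))^{-1} 𝟙_{[x^N_i,x^N_{i+1})} ℒ¹ the piecewise-constant measure. Then for any μ ∈ 𝒫(ℝ), μ̂^N → μ vaguely (i.e. against all compactly supported continuous functions) if and only if μ^N → μ vaguely. -/

import Mathlib

open Set MeasureTheory Filter
open scoped ENNReal NNReal Topology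

/-- The cone `𝒦_N` of `N+1` ordered particles with consecutive gaps at least `1/(N M)`. -/
def InCone (N : ℕ) (M : ℝ) (x : Fin (N+1) → ℝ) : Prop :=
  ∀ i : Fin N, x i.castSucc + 1 / (N * M) ≤ x i.succ

/-- The empirical measure `(N+1)⁻¹ ∑_i δ_{x_i}`. -/
noncomputable def empMeas (N : ℕ) (x : Fin (N+1) → ℝ) : Measure ℝ :=
  ((N : ℝ≥0∞) + 1)⁻¹ • ∑ i : Fin (N+1), Measure.dirac (x i)

/-- The piecewise-constant measure `∑_{i<N} (N Δx_i)⁻¹ 𝟙_{[x_i,x_{i+1})} ℒ¹`. -/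
noncomputable def pcMeas (N : ℕ) (x : Fin (N+1) → ℝ) : Measure ℝ :=
  ∑ i : Fin N, (ENNReal.ofReal (1 / (N * (x i.succ - x i.castSucc)))) •
    volume.restrict (Ico (x i.castSucc) (x i.succ))

/-!
Both measures are compared with the Riemann sum `N⁻¹ ∑_{i<N} f(x_i)`. Against the empirical
measure this costs at most `2 sup|f| / N`. Against the piecewise-constant measure, the `i`-th
term is `N⁻¹` times the gap between the mean of `f` over `[x_i, x_{i+1})` and `f(x_i)`. By
uniform continuity this gap is at most `ε` on intervals shorter than the modulus `δ`; a longer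
interval contributes only if `f` does not vanish on it, and then at most `2 sup|f| / δ` times the
length of its intersection with the `δ`-neighbourhood of `tsupport f`. These lengths add up to at
most the measure of that compact neighbourhood, so the two integrals differ by `ε + O(1/N)`.
-/

section IntervalAverage

variable {f : ℝ → ℝ} {a b ε C δ : ℝ}

lemma abs_inv_mul_setIntegral_Ico_sub_le_of_forall (hab : a < b)
    (hf : IntegrableOn f (Ico a b)) (h : ∀ y ∈ Ico a b, |f y - f a| ≤ ε) :
    |(b - a)⁻¹ * (∫ y in Ico a b, f y) - f a| ≤ ε := by
  have hba : 0 < b - a := sub_pos.2 hab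
  have hvol : volume.real (Ico a b) = b - a := Real.volume_real_Ico_of_le hab.le
  have hsub : (b - a)⁻¹ * (∫ y in Ico a b, f y) - f a
      = (b - a)⁻¹ * ∫ y in Ico a b, (f y - f a) := by
    rw [integral_sub hf (integrableOn_const measure_Ico_lt_top.ne), setIntegral_const, hvol,
      smul_eq_mul, mul_sub, inv_mul_cancel_left₀ hba.ne']
  have hint : |∫ y in Ico a b, (f y - f a)| ≤ ε * (b - a) := by
    simpa [hvol] using norm_setIntegral_le_of_norm_le_const (f := fun y => f y - f a)
      (measure_Ico_lt_top (μ := volume)) h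
  rw [hsub, abs_mul, abs_inv, abs_of_pos hba, inv_mul_le_iff₀ hba, mul_comm]
  exact hint

lemma abs_inv_mul_setIntegral_Ico_sub_le_of_le (hC : ∀ y, |f y| ≤ C) (hδ : 0 < δ)
    (hab : δ ≤ b - a) :
    |(b - a)⁻¹ * (∫ y in Ico a b, f y) - f a|
      ≤ 2 * C / δ * volume.real (Ico a b ∩ Metric.cthickening δ (tsupport f)) := by
  set T := Metric.cthickening δ (tsupport f)
  set ℓ := volume.real (Ico a b ∩ T)
  have hC0 : 0 ≤ C := (abs_nonneg _).trans (hC a)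
  have hℓ0 : 0 ≤ ℓ := measureReal_nonneg
  have hint : |∫ y in Ico a b, f y| ≤ C * ℓ := by
    rw [setIntegral_eq_of_subset_of_forall_sdiff_eq_zero measurableSet_Ico inter_subset_left
      fun y hy => image_eq_zero_of_notMem_tsupport
        fun hy' => hy.2 ⟨hy.1, Metric.self_subset_cthickening _ hy'⟩]
    exact norm_setIntegral_le_of_norm_le_const
      ((measure_mono inter_subset_left).trans_lt measure_Ico_lt_top) fun y _ => (Real.norm_eq_abs _).trans_le (hC y)
  have hfa : δ * |f a| ≤ C * ℓ := by
    by_cases ha : a ∈ tsupport f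
    · have hδℓ : δ ≤ ℓ := by
        have hsub : Ico a (a + δ) ⊆ Ico a b ∩ T := fun y hy =>
          ⟨⟨hy.1, by linarith [hy.2]⟩, Metric.mem_cthickening_of_dist_le y a δ _ ha <| by
            rw [Real.dist_eq, abs_of_nonneg (by linarith [hy.1])]; linarith [hy.2]⟩
        have := measureReal_mono hsub ((measure_mono inter_subset_left).trans_lt
          (measure_Ico_lt_top (μ := volume))).ne
        rwa [Real.volume_real_Ico_of_le (by linarith), add_sub_cancel_left] at this
      nlinarith [hC a, abs_nonneg (f a)]
    · rw [image_eq_zero_of_notMem_tsupport ha, abs_zero, mul_zero]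
      positivity
  have hba : 0 < b - a := hδ.trans_le hab
  calc |(b - a)⁻¹ * (∫ y in Ico a b, f y) - f a|
      ≤ (b - a)⁻¹ * |∫ y in Ico a b, f y| + |f a| := by
        exact (abs_sub _ _).trans_eq (by rw [abs_mul, abs_of_pos (inv_pos.2 hba)])
    _ ≤ δ⁻¹ * (C * ℓ) + δ⁻¹ * (C * ℓ) := by
        refine add_le_add (mul_le_mul ((inv_le_inv₀ hba hδ).2 hab) hint (abs_nonneg _)
          (inv_nonneg.2 hδ.le)) ?_
        rwa [le_inv_mul_iff₀ hδ]
    _ = 2 * C / δ * ℓ := by ring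

lemma abs_inv_mul_setIntegral_Ico_sub_le (hf : Continuous f) (hC : ∀ y, |f y| ≤ C)
    (hδ : 0 < δ) (hmod : ∀ s t, dist s t < δ → |f s - f t| ≤ ε) (hab : a < b) :
    |(b - a)⁻¹ * (∫ y in Ico a b, f y) - f a|
      ≤ ε + 2 * C / δ * volume.real (Ico a b ∩ Metric.cthickening δ (tsupport f)) := by
  have hε : 0 ≤ ε := by simpa using hmod a a (by simpa using hδ)
  have hC0 : 0 ≤ C := (abs_nonneg _).trans (hC a)
  rcases le_or_gt (b - a) δ with hshort | hlong
  · refine (abs_inv_mul_setIntegral_Ico_sub_le_of_forall hab (hf.integrableOn_Icc.mono_set Ico_subset_Icc_self)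
      fun y hy => hmod y a ?_).trans (le_add_of_nonneg_right (by positivity))
    rw [Real.dist_eq, abs_of_nonneg (by linarith [hy.1])]
    linarith [hy.2]
  · exact (abs_inv_mul_setIntegral_Ico_sub_le_of_le hC hδ hlong.le).trans
      (le_add_of_nonneg_left hε)

end IntervalAverage

section Particles

variable {N : ℕ} {x : Fin (N+1) → ℝ} {f : ℝ → ℝ} {C δ ε : ℝ}

lemma integral_empMeas (f : ℝ → ℝ) :
    ∫ y, f y ∂(empMeas N x) = ((N : ℝ) + 1)⁻¹ * ∑ i, f (x i) := by
  rw [empMeas, integral_smul_measure,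
    integral_finsetSum_measure fun i _ => integrable_dirac (by simp)]
  simp [integral_dirac, ENNReal.toReal_add]

lemma integral_pcMeas (hx : Monotone x) (hf : Continuous f) :
    ∫ y, f y ∂(pcMeas N x) = (N : ℝ)⁻¹ * ∑ i : Fin N,
      (x i.succ - x i.castSucc)⁻¹ * ∫ y in Ico (x i.castSucc) (x i.succ), f y := by
  rw [pcMeas, integral_finsetSum_measure fun i _ => (hf.integrableOn_Icc.mono_set
    Ico_subset_Icc_self).smul_measure ENNReal.ofReal_ne_top, Finset.mul_sum]
  refine Finset.sum_congr rfl fun i _ => ?_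
  have hgap : 0 ≤ x i.succ - x i.castSucc := sub_nonneg.2 (hx (Fin.castSucc_le_succ i))
  rw [integral_smul_measure, ENNReal.toReal_ofReal (by positivity), smul_eq_mul, one_div,
    mul_inv, mul_assoc]

lemma sum_measureReal_Ico_inter_le {μ : Measure ℝ} (hx : Monotone x) {S : Set ℝ}
    (hS : μ S ≠ ∞) :
    ∑ i : Fin N, μ.real (Ico (x i.castSucc) (x i.succ) ∩ S) ≤ μ.real S := by
  have := isFiniteMeasure_restrict.2 hS
  have := sum_measureReal_le_measureReal_univ (μ := μ.restrict S) (s := Finset.univ)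
    (t := fun i : Fin N => Ico (x i.castSucc) (x i.succ)) (fun _ _ => measurableSet_Ico)
    fun i _ j _ hij => by
      simpa using hx.pairwise_disjoint_on_Ico_succ (Fin.castSucc_injective _ |>.ne hij)
  simpa [measureReal_restrict_apply measurableSet_Ico] using this

lemma abs_inv_mul_sum_castSucc_sub_inv_mul_sum_le {g : Fin (N+1) → ℝ} (hN : 0 < N)
    (hg : ∀ i, |g i| ≤ C) :
    |(N : ℝ)⁻¹ * ∑ i : Fin N, g i.castSucc - ((N : ℝ) + 1)⁻¹ * ∑ i, g i| ≤ 2 * C / N := by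
  have hN' : (0 : ℝ) < N := Nat.cast_pos.2 hN
  rw [Fin.sum_univ_castSucc]
  set S := ∑ i : Fin N, g i.castSucc
  set c := g (Fin.last N)
  have hS : |S| ≤ N * C := (Finset.abs_sum_le_sum_abs _ _).trans <| by
    simpa using Finset.sum_le_sum (s := Finset.univ) fun i _ => hg (Fin.castSucc i)
  have hc : |(N : ℝ) * c| ≤ N * C := by
    rw [abs_mul, abs_of_pos hN']; exact mul_le_mul_of_nonneg_left (hg _) hN'.le
  have hsplit : (N : ℝ)⁻¹ * S - ((N : ℝ) + 1)⁻¹ * (S + c) = (S - N * c) / (N * (N + 1)) := by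
    field_simp; ring
  rw [hsplit, abs_div, abs_of_pos (show (0 : ℝ) < N * (N + 1) by positivity),
    div_le_div_iff₀ (by positivity) hN']
  nlinarith [abs_sub S (N * c), (abs_nonneg _).trans (hg 0)]

lemma abs_integral_pcMeas_sub_integral_empMeas_le (hN : 0 < N) (hx : StrictMono x)
    (hf : Continuous f) (hfs : HasCompactSupport f) (hC : ∀ y, |f y| ≤ C) (hδ : 0 < δ)
    (hmod : ∀ s t, dist s t < δ → |f s - f t| ≤ ε) :
    |∫ y, f y ∂(pcMeas N x) - ∫ y, f y ∂(empMeas N x)|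
      ≤ ε + (2 * C / δ * volume.real (Metric.cthickening δ (tsupport f)) + 2 * C) / N := by
  have hN' : (0 : ℝ) < N := Nat.cast_pos.2 hN
  set V := volume.real (Metric.cthickening δ (tsupport f))
  have hpc : |∫ y, f y ∂(pcMeas N x) - (N : ℝ)⁻¹ * ∑ i : Fin N, f (x i.castSucc)|
      ≤ ε + 2 * C / δ * V / N := by
    have hC0 : 0 ≤ C := (abs_nonneg _).trans (hC 0)
    rw [integral_pcMeas hx.monotone hf, ← mul_sub, ← Finset.sum_sub_distrib, abs_mul, abs_inv,
      abs_of_pos hN']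
    calc (N : ℝ)⁻¹ * |∑ i : Fin N, ((x i.succ - x i.castSucc)⁻¹ *
            (∫ y in Ico (x i.castSucc) (x i.succ), f y) - f (x i.castSucc))|
        ≤ (N : ℝ)⁻¹ * ∑ i : Fin N, (ε + 2 * C / δ *
            volume.real (Ico (x i.castSucc) (x i.succ) ∩ Metric.cthickening δ (tsupport f))) := by
          gcongr
          exact (Finset.abs_sum_le_sum_abs _ _).trans <| Finset.sum_le_sum fun i _ =>
            abs_inv_mul_setIntegral_Ico_sub_le hf hC hδ hmod (hx i.castSucc_lt_succ)
      _ ≤ (N : ℝ)⁻¹ * (N * ε + 2 * C / δ * V) := by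
          rw [Finset.sum_add_distrib, ← Finset.mul_sum]
          simp only [Finset.sum_const, Finset.card_univ, Fintype.card_fin, nsmul_eq_mul]
          gcongr
          exact sum_measureReal_Ico_inter_le hx.monotone
            hfs.isCompact.cthickening.measure_lt_top.ne
      _ = ε + 2 * C / δ * V / N := by field_simp
  have hemp := abs_inv_mul_sum_castSucc_sub_inv_mul_sum_le hN (g := fun i => f (x i))
    fun i => hC _
  rw [integral_empMeas]
  calc _ ≤ _ := abs_sub_le _ ((N : ℝ)⁻¹ * ∑ i : Fin N, f (x i.castSucc)) _
    _ ≤ ε + 2 * C / δ * V / N + 2 * C / N := add_le_add hpc hemp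
    _ = _ := by ring

end Particles

lemma InCone.strictMono {N : ℕ} {M : ℝ} {x : Fin (N+1) → ℝ} (hM : 0 < M)
    (hx : InCone N M x) : StrictMono x :=
  Fin.strictMono_iff_lt_succ.2 fun i => by
    have : (0 : ℝ) < N := Nat.cast_pos.2 i.pos
    have : 0 < 1 / (N * M) := by positivity
    linarith [hx i]

lemma tendsto_dist_integral_empMeas_integral_pcMeas {x : (N : ℕ) → Fin (N+1) → ℝ}
    (hx : ∀ N, StrictMono (x N)) {f : ℝ → ℝ} (hf : Continuous f) (hfs : HasCompactSupport f) :
    Tendsto (fun N => dist (∫ y, f y ∂(empMeas N (x N))) (∫ y, f y ∂(pcMeas N (x N))))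
      atTop (𝓝 0) := by
  obtain ⟨C, hC⟩ := hfs.exists_bound_of_continuous hf
  refine Metric.tendsto_nhds.2 fun ε hε => ?_
  obtain ⟨δ, hδ, hmod⟩ := Metric.uniformContinuous_iff.1
    (hfs.uniformContinuous_of_continuous hf) (ε / 2) (half_pos hε)
  set K := 2 * C / δ * volume.real (Metric.cthickening δ (tsupport f)) + 2 * C
  filter_upwards [eventually_gt_atTop 0, (tendsto_const_div_atTop_nhds_zero_nat K).eventually
    (gt_mem_nhds (half_pos hε))] with N hN hK
  rw [dist_zero_right, Real.norm_eq_abs, abs_dist, dist_comm, Real.dist_eq]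
  calc _ ≤ ε / 2 + K / N := abs_integral_pcMeas_sub_integral_empMeas_le hN (hx N) hf hfs
        (fun y => (Real.norm_eq_abs _).symm.trans_le (hC y)) hδ
        fun s t h => (Real.dist_eq _ _ ▸ hmod h).le
    _ < ε := by linarith

theorem emp_vague_iff_pc_vague_general (M : ℝ) (hM : 0 < M)
    (x : (N : ℕ) → Fin (N+1) → ℝ) (hx : ∀ N, InCone N M (x N))
    (μ : Measure ℝ) :
    (∀ f : ℝ → ℝ, Continuous f → HasCompactSupport f →
        Tendsto (fun N => ∫ y, f y ∂(empMeas N (x N))) atTop (𝓝 (∫ y, f y ∂μ)))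
    ↔ (∀ f : ℝ → ℝ, Continuous f → HasCompactSupport f →
        Tendsto (fun N => ∫ y, f y ∂(pcMeas N (x N))) atTop (𝓝 (∫ y, f y ∂μ))) :=
  forall₃_congr fun _ hf hfs => tendsto_iff_of_dist <|
    tendsto_dist_integral_empMeas_integral_pcMeas (fun N => (hx N).strictMono hM) hf hfs

/-- for particles `x^N ∈ 𝒦_N`, the empirical measures converge vaguely to
`μ` if and only if the piecewise-constant measures converge vaguely to `μ`. -/
theorem emp_vague_iff_pc_vague (M : ℝ) (hM : 0 < M)
    (x : (N : ℕ) → Fin (N+1) → ℝ) (hx : ∀ N, InCone N M (x N))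
    (μ : Measure ℝ) [IsProbabilityMeasure μ] :
    (∀ f : ℝ → ℝ, Continuous f → HasCompactSupport f →
        Tendsto (fun N => ∫ y, f y ∂(empMeas N (x N))) atTop (𝓝 (∫ y, f y ∂μ)))
    ↔ (∀ f : ℝ → ℝ, Continuous f → HasCompactSupport f →
        Tendsto (fun N => ∫ y, f y ∂(pcMeas N (x N))) atTop (𝓝 (∫ y, f y ∂μ))) :=
  emp_vague_iff_pc_vague_general M hM x hx μ
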